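/- arXiv:math/0608207 — 3 statements merged into one kernel-verified Lean document; each statement's English description precedes it below -/
import Mathlib

section
/- Let G be a finite group, x ∈ S the simplex of R[G]. Then x commutes with c_x, i.e. x·c_x = c_x·x, where c_x = (1/|G_x|) Σ_{g∈G_x} g and G_x = ⟨Supp(x^{n_x})⟩. -/
/-!
Let `S = Supp x`. Nonnegative coefficients cannot cancel, so `Supp (x ^ n) = S ^ n`. For `s ∈ S`
and `g ∈ S ^ n`, `s g s⁻¹ = (s g s ^ (n - 1)) (s ^ n)⁻¹` is a product of elements of `S ^ n` and
their inverses, so `S` normalizes `G_x = ⟨S ^ n⟩`. Conjugation by `s` then permutes `G_x`, so `s`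
commutes with `Σ_{g ∈ G_x} g`, and hence so does `x`.
-/

open scoped Pointwise

namespace Subgroup

variable {G : Type*} [Group G]

lemma conj_mem_closure_pow {S : Set G} {n : ℕ} {s : G} (hs : s ∈ S) {g : G}
    (hg : g ∈ closure (S ^ n)) : s * g * s⁻¹ ∈ closure (S ^ n) := by
  cases n with
  | zero =>
    rw [pow_zero, ← Set.singleton_one, closure_singleton_one, mem_bot] at hg ⊢
    simp [hg]
  | succ m =>
    have hpow : ∀ {a}, a ∈ S ^ (m + 1) → a ∈ closure (S ^ (m + 1)) := fun ha ↦ subset_closure ha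
    have hconj :
        closure (S ^ (m + 1)) ≤ (closure (S ^ (m + 1))).comap (MulAut.conj s).toMonoidHom := by
      rw [closure_le]
      intro a ha
      have hsplit : S ^ 1 * S ^ (m + 1) * S ^ m = S ^ (m + 1) * S ^ (m + 1) := by
        rw [← pow_add, ← pow_add, ← pow_add]
        ring_nf
      have hmem : s * a * s ^ m ∈ S ^ (m + 1) * S ^ (m + 1) :=
        hsplit ▸ Set.mul_mem_mul (Set.mul_mem_mul (by rwa [pow_one]) ha) (Set.pow_mem_pow hs)
      obtain ⟨b, hb, c, hc, hbc⟩ := Set.mem_mul.1 hmem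
      have hconj_eq : s * a * s⁻¹ = s * a * s ^ m * (s ^ (m + 1))⁻¹ := by group
      rw [SetLike.mem_coe, mem_comap, MulEquiv.coe_toMonoidHom, MulAut.conj_apply, hconj_eq, ← hbc]
      exact mul_mem (mul_mem (hpow hb) (hpow hc)) (inv_mem (hpow (Set.pow_mem_pow hs)))
    exact hconj hg

lemma mem_normalizer_closure_pow [Finite G] {S : Set G} (n : ℕ) {s : G} (hs : s ∈ S) :
    s ∈ normalizer (closure (S ^ n) : Set G) :=
  mem_normalizer_fintype fun _ hg ↦ conj_mem_closure_pow hs hg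

end Subgroup

namespace MonoidAlgebra

open Finset

section Nonneg

variable {k G : Type*} [Semiring k] [PartialOrder k] [IsStrictOrderedRing k]

lemma coeff_mul_nonneg [Mul G] {x y : MonoidAlgebra k G} (hx : ∀ g, 0 ≤ x.coeff g)
    (hy : ∀ g, 0 ≤ y.coeff g) (g : G) : 0 ≤ (x * y).coeff g := by
  classical
  rw [coeff_mul]
  exact sum_nonneg fun a _ ↦ sum_nonneg fun b _ ↦ by
    dsimp only
    split_ifs
    exacts [mul_nonneg (hx a) (hy b), le_rfl]

lemma coeff_pow_nonneg [Monoid G] {x : MonoidAlgebra k G} (hx : ∀ g, 0 ≤ x.coeff g) (n : ℕ)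
    (g : G) : 0 ≤ (x ^ n).coeff g := by
  induction n generalizing g with
  | zero =>
    classical
    rw [pow_zero, one_def, coeff_single, Finsupp.single_apply]
    split_ifs <;> simp
  | succ n ih => exact pow_succ x n ▸ coeff_mul_nonneg ih hx g

lemma mul_le_coeff_mul [Mul G] {x y : MonoidAlgebra k G} (hx : ∀ g, 0 ≤ x.coeff g)
    (hy : ∀ g, 0 ≤ y.coeff g) (a b : G) : x.coeff a * y.coeff b ≤ (x * y).coeff (a * b) := by
  classical
  by_cases ha : a ∈ x.coeff.support
  swap
  · rw [Finsupp.notMem_support_iff.1 ha, zero_mul]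
    exact coeff_mul_nonneg hx hy _
  by_cases hb : b ∈ y.coeff.support
  swap
  · rw [Finsupp.notMem_support_iff.1 hb, mul_zero]
    exact coeff_mul_nonneg hx hy _
  have hterm : ∀ a' b', 0 ≤ if a' * b' = a * b then x.coeff a' * y.coeff b' else 0 :=
    fun a' b' ↦ by split_ifs; exacts [mul_nonneg (hx a') (hy b'), le_rfl]
  rw [coeff_mul]
  refine le_trans ?_ (single_le_sum (fun a' _ ↦ sum_nonneg fun b' _ ↦ hterm a' b') ha)
  refine le_trans ?_ (single_le_sum (fun b' _ ↦ hterm a b') hb)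
  simp

lemma support_coeff_mul_of_nonneg [Mul G] [DecidableEq G] {x y : MonoidAlgebra k G}
    (hx : ∀ g, 0 ≤ x.coeff g) (hy : ∀ g, 0 ≤ y.coeff g) :
    (x * y).coeff.support = x.coeff.support * y.coeff.support := by
  refine (support_coeff_mul_subset x y).antisymm ?_
  intro g hg
  obtain ⟨a, ha, b, hb, rfl⟩ := mem_mul.1 hg
  rw [Finsupp.mem_support_iff] at ha hb ⊢
  have hpos : 0 < x.coeff a * y.coeff b :=
    mul_pos ((hx a).lt_of_ne' ha) ((hy b).lt_of_ne' hb)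
  exact (hpos.trans_le (mul_le_coeff_mul hx hy a b)).ne'

lemma support_coeff_pow_of_nonneg [Monoid G] [DecidableEq G] {x : MonoidAlgebra k G}
    (hx : ∀ g, 0 ≤ x.coeff g) (n : ℕ) : (x ^ n).coeff.support = x.coeff.support ^ n := by
  induction n with
  | zero => simp
  | succ n ih =>
    rw [pow_succ, support_coeff_mul_of_nonneg (coeff_pow_nonneg hx n) hx, ih, pow_succ]

end Nonneg

section Normalizer

variable {k G : Type*} [Semiring k] [Group G] [Fintype G]

lemma commute_single_sum_single_of_mem_normalizer {H : Subgroup G} [DecidablePred (· ∈ H)]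
    {s : G} (hs : s ∈ Subgroup.normalizer (H : Set G)) (r : k) :
    Commute (single s r) (∑ g ∈ univ.filter (· ∈ H), single g (1 : k)) := by
  simp only [Commute, SemiconjBy, mul_sum, sum_mul, single_mul_single, mul_one, one_mul]
  refine sum_equiv (MulAut.conj s).toEquiv (fun g ↦ ?_) (fun g _ ↦ ?_)
  · simpa using Subgroup.mem_normalizer_iff.1 hs g
  · simp

lemma commute_sum_single_of_support_subset_normalizer {H : Subgroup G} [DecidablePred (· ∈ H)]
    {x : MonoidAlgebra k G} (hx : ∀ s ∈ x.coeff.support, s ∈ Subgroup.normalizer (H : Set G)) :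
    Commute x (∑ g ∈ univ.filter (· ∈ H), single g (1 : k)) := by
  rw [← sum_coeff_single x]
  exact Commute.sum_left _ _ _ fun s hs ↦ commute_single_sum_single_of_mem_normalizer (hx s hs) _

end Normalizer

end MonoidAlgebra

open scoped Classical in
theorem stmt8_general {G : Type*} [Group G] [Fintype G]
    (x : MonoidAlgebra ℝ G) (hx0 : ∀ g, 0 ≤ x.coeff g)
    (n : ℕ)
    (H : Subgroup G) (hH : H = Subgroup.closure ((x ^ n).coeff.support : Set G))
    (c : MonoidAlgebra ℝ G)
    (hc : c = (Nat.card H : ℝ)⁻¹ •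
      ∑ g ∈ Finset.univ.filter (· ∈ H), MonoidAlgebra.single g (1 : ℝ)) :
    x * c = c * x := by
  have hsupp : ((x ^ n).coeff.support : Set G) = (x.coeff.support : Set G) ^ n := by
    rw [MonoidAlgebra.support_coeff_pow_of_nonneg hx0, Finset.coe_pow]
  have hnormal : ∀ s ∈ x.coeff.support, s ∈ Subgroup.normalizer (H : Set G) := fun s hs ↦
    hH ▸ hsupp ▸ Subgroup.mem_normalizer_closure_pow n hs
  subst hc
  exact ((MonoidAlgebra.commute_sum_single_of_support_subset_normalizer hnormal).smul_right _).eq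

open scoped Classical in
/-- For `x` in the simplex of `R[G]`, `x` commutes with
`c_x = (1/|G_x|) Σ_{g∈G_x} g`, where `G_x = ⟨Supp(x^{n_x})⟩`. -/
theorem stmt8 {G : Type*} [Group G] [Fintype G]
    (x : MonoidAlgebra ℝ G) (hx1 : ∑ g : G, x.coeff g = 1) (hx0 : ∀ g, 0 ≤ x.coeff g)
    (n : ℕ) (hn : IsLeast {k : ℕ | 0 < k ∧ (x ^ k).coeff (1 : G) ≠ 0} n)
    (H : Subgroup G) (hH : H = Subgroup.closure ((x ^ n).coeff.support : Set G))
    (c : MonoidAlgebra ℝ G)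
    (hc : c = (Nat.card H : ℝ)⁻¹ •
      ∑ g ∈ Finset.univ.filter (· ∈ H), MonoidAlgebra.single g (1 : ℝ)) :
    x * c = c * x :=
  stmt8_general x hx0 n H hH c hc
end

section
/- Let G be a finite group and x ∈ S the simplex of R[G]. Then the set S(x) of all limit points of the sequence (x^n)_{n∈ℕ} equals {c_x x^r : 0 ≤ r < m_x}. In particular, (x^n) converges (necessarily to c_x) if and only if x^1 ∈ R[G_x] equivalently m_x = 1. -/
/-!
Put `z = x ^ m`. All powers of `z` are supported in `H`. Since `1 ∈ Supp (x ^ n)`, the supports of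
`(x ^ n) ^ L` increase with `L` and exhaust the submonoid generated by `Supp (x ^ n)`, which in a
finite group is `H`; so some power `P = z ^ K` is supported on all of `H` and dominates `θ • c`
for some `θ > 0`. As `c` annihilates the elements of augmentation zero supported in `H`, right
multiplication by `P` contracts their ℓ¹-norm by `1 - θ`, whence `z ^ k → c` and
`x ^ (k * m + r) → c * x ^ r`. The `m` residue classes exhaust the sequence, giving the limit
points. Conversely, if `(x ^ k)` converges then `c = c * x`, which forces `Supp x ⊆ H`.
-/

open Filter Topology

theorem tendsto_zero_of_antitone_of_le_mul {D : ℕ → ℝ} {K : ℕ} {q : ℝ} (hD0 : ∀ k, 0 ≤ D k)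
    (hD : Antitone D) (hq : q < 1) (hK : ∀ k, D (k + K) ≤ q * D k) : Tendsto D atTop (𝓝 0) := by
  have hlim := tendsto_atTop_ciInf hD ⟨0, by rintro _ ⟨k, rfl⟩; exact hD0 k⟩
  have hle : ⨅ k, D k ≤ q * ⨅ k, D k :=
    le_of_tendsto_of_tendsto' (hlim.comp (tendsto_add_atTop_nat K)) (hlim.const_mul q) hK
  have h0 : 0 ≤ ⨅ k, D k := le_ciInf hD0
  convert hlim
  nlinarith

theorem exists_lt_eq_of_tendsto_comp_strictMono {X : Type*} [TopologicalSpace X] [T2Space X]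
    {f : ℕ → X} {a : ℕ → X} {m : ℕ} (hm : 0 < m)
    (hf : ∀ r, Tendsto (fun k => f (k * m + r)) atTop (𝓝 (a r))) {φ : ℕ → ℕ} (hφ : StrictMono φ)
    {y : X} (hy : Tendsto (f ∘ φ) atTop (𝓝 y)) : ∃ r < m, y = a r := by
  obtain ⟨r, hr⟩ := Finite.exists_infinite_fiber fun k => (⟨φ k % m, Nat.mod_lt _ hm⟩ : Fin m)
  have hfreq : ∃ᶠ k in atTop, φ k % m = r :=
    (Nat.frequently_atTop_iff_infinite.2 (Set.infinite_coe_iff.1 hr)).mono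
      fun k hk => congrArg Fin.val hk
  obtain ⟨ψ, hψ, hψr⟩ := extraction_of_frequently_atTop hfreq
  have hdiv : Tendsto (fun j => φ (ψ j) / m) atTop atTop :=
    (Nat.tendsto_div_const_atTop hm.ne').comp (hφ.comp hψ).tendsto_atTop
  refine ⟨r, r.2, tendsto_nhds_unique (hy.comp hψ.tendsto_atTop) ?_⟩
  refine ((hf r).comp hdiv).congr fun j => ?_
  simp only [Function.comp_apply, ← hψr j, Nat.div_add_mod']

namespace MonoidAlgebra

section Nonneg

variable {M : Type*} [Monoid M] {u v : MonoidAlgebra ℝ M}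

theorem coeff_mul_nonneg_s9 (hu : ∀ a, 0 ≤ u.coeff a) (hv : ∀ a, 0 ≤ v.coeff a) (a : M) :
    0 ≤ (u * v).coeff a := by
  classical
  rw [coeff_mul]
  refine Finsupp.sum_nonneg' fun b => Finsupp.sum_nonneg' fun c => ?_
  split_ifs
  exacts [mul_nonneg (hu b) (hv c), le_rfl]

theorem coeff_pow_nonneg_s9 (hu : ∀ a, 0 ≤ u.coeff a) (k : ℕ) (a : M) : 0 ≤ (u ^ k).coeff a := by
  induction k generalizing a with
  | zero =>
    rw [pow_zero, one_def, coeff_single]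
    exact Finsupp.single_nonneg.2 zero_le_one a
  | succ k ih => rw [pow_succ]; exact coeff_mul_nonneg_s9 ih hu a

theorem mul_mem_support_coeff_mul (hu : ∀ a, 0 ≤ u.coeff a) (hv : ∀ a, 0 ≤ v.coeff a) {a b : M}
    (ha : a ∈ u.coeff.support) (hb : b ∈ v.coeff.support) : a * b ∈ (u * v).coeff.support := by
  classical
  have hterm : ∀ a' b', 0 ≤ if a' * b' = a * b then u.coeff a' * v.coeff b' else 0 := by
    intro a' b'
    split_ifs
    exacts [mul_nonneg (hu a') (hv b'), le_rfl]
  have hle : u.coeff a * v.coeff b ≤ (u * v).coeff (a * b) := by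
    rw [coeff_mul]
    calc u.coeff a * v.coeff b = if a * b = a * b then u.coeff a * v.coeff b else 0 :=
          (if_pos rfl).symm
      _ ≤ v.coeff.sum fun b' s => if a * b' = a * b then u.coeff a * s else 0 :=
        Finset.single_le_sum (fun b' _ => hterm a b') hb
      _ ≤ _ := Finset.single_le_sum
        (f := fun a' => v.coeff.sum fun b' s => if a' * b' = a * b then u.coeff a' * s else 0)
        (fun a' _ => Finsupp.sum_nonneg' fun b' => hterm a' b') ha
  have hpos : 0 < u.coeff a * v.coeff b :=
    mul_pos ((hu a).lt_of_ne' (Finsupp.mem_support_iff.1 ha))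
      ((hv b).lt_of_ne' (Finsupp.mem_support_iff.1 hb))
  exact Finsupp.mem_support_iff.2 (hpos.trans_le hle).ne'

theorem support_coeff_pow_subset {S : Submonoid M} (hu : (u.coeff.support : Set M) ⊆ S) (k : ℕ) :
    ((u ^ k).coeff.support : Set M) ⊆ S := by
  classical
  induction k with
  | zero => simp [one_def, coeff_single, S.one_mem]
  | succ k ih =>
    intro a ha
    obtain ⟨b, hb, c, hc, rfl⟩ :=
      Finset.mem_mul.1 (support_coeff_mul_subset _ _ (pow_succ u k ▸ ha))
    exact S.mul_mem (ih hb) (hu hc)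

end Nonneg

section Closure

variable {M : Type*} [Monoid M] {u : MonoidAlgebra ℝ M}

theorem exists_mem_support_coeff_pow_of_mem_closure (hu : ∀ a, 0 ≤ u.coeff a) {a : M}
    (ha : a ∈ Submonoid.closure (u.coeff.support : Set M)) : ∃ k, a ∈ (u ^ k).coeff.support := by
  induction ha using Submonoid.closure_induction with
  | mem b hb => exact ⟨1, by rwa [pow_one]⟩
  | one => exact ⟨0, by simp [one_def, coeff_single]⟩
  | mul b c _ _ hb hc =>
    obtain ⟨i, hi⟩ := hb
    obtain ⟨j, hj⟩ := hc
    exact ⟨i + j, pow_add u i j ▸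
      mul_mem_support_coeff_mul (coeff_pow_nonneg_s9 hu i) (coeff_pow_nonneg_s9 hu j) hi hj⟩

theorem monotone_support_coeff_pow (hu : ∀ a, 0 ≤ u.coeff a) (h1 : 1 ∈ u.coeff.support) :
    Monotone fun k => (u ^ k).coeff.support := by
  refine monotone_nat_of_le_succ fun k a ha => ?_
  simpa [pow_succ] using mul_mem_support_coeff_mul (coeff_pow_nonneg_s9 hu k) hu ha h1

theorem exists_closure_subset_support_coeff_pow {G : Type*} [Group G] [Finite G]
    {u : MonoidAlgebra ℝ G} (hu : ∀ a, 0 ≤ u.coeff a) (h1 : 1 ∈ u.coeff.support) :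
    ∃ L, (Subgroup.closure (u.coeff.support : Set G) : Set G) ⊆ (u ^ L).coeff.support := by
  have hev : ∀ a : G, ∀ᶠ L in atTop,
      a ∈ Subgroup.closure (u.coeff.support : Set G) → a ∈ (u ^ L).coeff.support := by
    intro a
    by_cases ha : a ∈ Subgroup.closure (u.coeff.support : Set G)
    · rw [← Subgroup.mem_toSubmonoid, Subgroup.closure_toSubmonoid_of_finite] at ha
      obtain ⟨k, hk⟩ := exists_mem_support_coeff_pow_of_mem_closure hu ha
      exact eventually_atTop.2 ⟨k, fun L hL _ => monotone_support_coeff_pow hu h1 hL hk⟩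
    · exact Eventually.of_forall fun _ h => absurd h ha
  obtain ⟨L, hL⟩ := (eventually_all.2 hev).exists
  exact ⟨L, fun a ha => hL a ha⟩

end Closure

noncomputable abbrev augmentation (G : Type*) [Monoid G] : MonoidAlgebra ℝ G →ₐ[ℝ] ℝ :=
  Bialgebra.counitAlgHom ℝ _

theorem augmentation_apply {G : Type*} [Monoid G] [Fintype G] (u : MonoidAlgebra ℝ G) :
    augmentation G u = ∑ g, u.coeff g := by
  induction u using MonoidAlgebra.induction_linear with
  | zero => simp
  | add a b ha hb => rw [map_add, ha, hb, coeff_add, ← Finset.sum_add_distrib]; rfl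
  | single g r => simp

section Uniform

variable {G : Type*} [Group G] [Fintype G] (H : Subgroup G)

open scoped Classical in
noncomputable def uniform : MonoidAlgebra ℝ G :=
  (Nat.card H : ℝ)⁻¹ • ∑ g ∈ Finset.univ.filter (· ∈ H), single g (1 : ℝ)

variable {H}

open scoped Classical in
theorem coeff_uniform (g : G) :
    (uniform H).coeff g = if g ∈ H then (Nat.card H : ℝ)⁻¹ else 0 := by
  simp [uniform, coeff_sum, coeff_single, Finsupp.single_apply]

theorem coeff_uniform_nonneg (g : G) : 0 ≤ (uniform H).coeff g := by
  rw [coeff_uniform]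
  split_ifs
  exacts [by positivity, le_rfl]

theorem mem_support_coeff_uniform {g : G} : g ∈ (uniform H).coeff.support ↔ g ∈ H := by
  simp [coeff_uniform, Nat.card_pos.ne']

theorem augmentation_uniform : augmentation G (uniform H) = 1 := by
  classical
  rw [augmentation_apply]
  simp only [coeff_uniform, Finset.sum_ite, Finset.sum_const_zero, add_zero, Finset.sum_const,
    nsmul_eq_mul, Nat.card_eq_fintype_card, Fintype.card_subtype]
  exact mul_inv_cancel₀ (Nat.cast_ne_zero.2 (Finset.card_pos.2 ⟨1, by simp⟩).ne')

theorem uniform_mul_of_support_subset {u : MonoidAlgebra ℝ G}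
    (hu : (u.coeff.support : Set G) ⊆ H) :
    uniform H * u = augmentation G u • uniform H := by
  ext g
  rw [coeff_mul_apply_right, Finsupp.sum_fintype _ _ (by simp), coeff_smul_apply, smul_eq_mul,
    augmentation_apply, Finset.sum_mul]
  refine Finset.sum_congr rfl fun h _ => ?_
  by_cases hh : h ∈ u.coeff.support
  · rw [coeff_uniform, coeff_uniform, H.mul_mem_cancel_right (H.inv_mem (hu hh)), mul_comm]
  · rw [Finsupp.notMem_support_iff.1 hh, mul_zero, zero_mul]

theorem mul_uniform_of_support_subset {u : MonoidAlgebra ℝ G}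
    (hu : (u.coeff.support : Set G) ⊆ H) :
    u * uniform H = augmentation G u • uniform H := by
  ext g
  rw [coeff_mul_apply_left, Finsupp.sum_fintype _ _ (by simp), coeff_smul_apply, smul_eq_mul,
    augmentation_apply, Finset.sum_mul]
  refine Finset.sum_congr rfl fun h _ => ?_
  by_cases hh : h ∈ u.coeff.support
  · rw [coeff_uniform, coeff_uniform, H.mul_mem_cancel_left (H.inv_mem (hu hh))]
  · rw [Finsupp.notMem_support_iff.1 hh, zero_mul, zero_mul]

theorem support_subset_of_uniform_mul_eq {u : MonoidAlgebra ℝ G} (hu : ∀ g, 0 ≤ u.coeff g)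
    (h : uniform H * u = uniform H) : (u.coeff.support : Set G) ⊆ H := by
  intro g hg
  have := mul_mem_support_coeff_mul coeff_uniform_nonneg hu
    (mem_support_coeff_uniform.2 H.one_mem) hg
  rwa [h, one_mul, mem_support_coeff_uniform] at this

end Uniform

section L1

variable {G : Type*} [Fintype G]

noncomputable def l1Norm (u : MonoidAlgebra ℝ G) : ℝ := ∑ g, |u.coeff g|

theorem l1Norm_nonneg (u : MonoidAlgebra ℝ G) : 0 ≤ l1Norm u :=
  Finset.sum_nonneg fun _ _ => abs_nonneg _

theorem abs_coeff_le_l1Norm (u : MonoidAlgebra ℝ G) (g : G) : |u.coeff g| ≤ l1Norm u :=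
  Finset.single_le_sum (fun h _ => abs_nonneg (u.coeff h)) (Finset.mem_univ g)

theorem l1Norm_eq_augmentation [Monoid G] {u : MonoidAlgebra ℝ G} (hu : ∀ g, 0 ≤ u.coeff g) :
    l1Norm u = augmentation G u := by
  rw [augmentation_apply]
  exact Finset.sum_congr rfl fun g _ => abs_of_nonneg (hu g)

theorem l1Norm_mul_le [Group G] (u v : MonoidAlgebra ℝ G) :
    l1Norm (u * v) ≤ l1Norm u * l1Norm v := by
  calc l1Norm (u * v) = ∑ g, |∑ h, u.coeff h * v.coeff (h⁻¹ * g)| :=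
        Finset.sum_congr rfl fun g _ => by
          rw [coeff_mul_apply_left, Finsupp.sum_fintype _ _ (by simp)]
    _ ≤ ∑ g, ∑ h, |u.coeff h| * |v.coeff (h⁻¹ * g)| := Finset.sum_le_sum fun g _ =>
        (Finset.abs_sum_le_sum_abs _ _).trans_eq (by simp only [abs_mul])
    _ = ∑ h, |u.coeff h| * ∑ g, |v.coeff (h⁻¹ * g)| := by
        rw [Finset.sum_comm]; simp only [Finset.mul_sum]
    _ = l1Norm u * l1Norm v := by
        rw [l1Norm, l1Norm, Finset.sum_mul]
        exact Finset.sum_congr rfl fun h _ =>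
          congrArg _ (Equiv.sum_comp (Equiv.mulLeft h⁻¹) fun g => |v.coeff g|)

theorem tendsto_coeff_mul_of_tendsto_l1Norm [Group G] {a : ℕ → MonoidAlgebra ℝ G}
    {b : MonoidAlgebra ℝ G}
    (h : Tendsto (fun k => l1Norm (a k - b)) atTop (𝓝 0)) (v : MonoidAlgebra ℝ G) :
    Tendsto (fun k => ⇑(a k * v).coeff) atTop (𝓝 ⇑(b * v).coeff) := by
  refine tendsto_pi_nhds.2 fun g => tendsto_iff_norm_sub_tendsto_zero.2 ?_
  refine squeeze_zero (fun _ => norm_nonneg _) (fun k => ?_)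
    (by simpa using h.mul_const (l1Norm v))
  calc ‖(a k * v).coeff g - (b * v).coeff g‖ = |((a k - b) * v).coeff g| := by
        rw [sub_mul, coeff_sub]; rfl
    _ ≤ l1Norm ((a k - b) * v) := abs_coeff_le_l1Norm _ _
    _ ≤ l1Norm (a k - b) * l1Norm v := l1Norm_mul_le _ _

end L1

section Convergence

variable {G : Type*} [Group G] [Fintype G] {H : Subgroup G}

theorem exists_pos_smul_uniform_le {P : MonoidAlgebra ℝ G} (hP : ∀ g, 0 ≤ P.coeff g)
    (hH : (H : Set G) ⊆ P.coeff.support) : ∃ θ > 0, ∀ g, θ * (uniform H).coeff g ≤ P.coeff g := by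
  have hev : ∀ g, ∀ᶠ θ in 𝓝 (0 : ℝ), θ * (uniform H).coeff g ≤ P.coeff g := by
    intro g
    by_cases hg : g ∈ H
    · have hpos : 0 < P.coeff g := (hP g).lt_of_ne' (Finsupp.mem_support_iff.1 (hH hg))
      have hcont : Tendsto (fun θ : ℝ => θ * (uniform H).coeff g) (𝓝 0) (𝓝 0) := by
        simpa using (continuous_mul_const ((uniform H).coeff g)).tendsto 0
      exact (hcont.eventually (gt_mem_nhds hpos)).mono fun _ h => h.le
    · exact Eventually.of_forall fun θ => by simp [coeff_uniform, hg, hP g]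
  obtain ⟨θ, hθP, hθ⟩ := ((eventually_all.2 hev).filter_mono nhdsWithin_le_nhds |>.and
    (self_mem_nhdsWithin (s := Set.Ioi 0))).exists
  exact ⟨θ, hθ, hθP⟩

theorem l1Norm_mul_le_of_smul_uniform_le {P u : MonoidAlgebra ℝ G} {θ : ℝ}
    (hP : augmentation G P = 1) (hθ : ∀ g, θ * (uniform H).coeff g ≤ P.coeff g)
    (hu : (u.coeff.support : Set G) ⊆ H) (hu0 : augmentation G u = 0) :
    l1Norm (u * P) ≤ (1 - θ) * l1Norm u := by
  set w := P - θ • uniform H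
  have hw : ∀ g, 0 ≤ w.coeff g := fun g => sub_nonneg.2 (hθ g)
  have huP : u * P = u * w := by
    rw [mul_sub, mul_smul_comm, mul_uniform_of_support_subset hu, hu0, zero_smul, smul_zero,
      sub_zero]
  calc l1Norm (u * P) = l1Norm (u * w) := by rw [huP]
    _ ≤ l1Norm u * l1Norm w := l1Norm_mul_le u w
    _ = (1 - θ) * l1Norm u := by
      rw [l1Norm_eq_augmentation hw, map_sub, map_smul, hP, augmentation_uniform, smul_eq_mul,
        mul_one, mul_comm]

theorem tendsto_l1Norm_pow_sub_uniform {z : MonoidAlgebra ℝ G} (hz0 : ∀ g, 0 ≤ z.coeff g)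
    (hz1 : augmentation G z = 1) (hzH : (z.coeff.support : Set G) ⊆ H) {K : ℕ}
    (hK : (H : Set G) ⊆ (z ^ K).coeff.support) :
    Tendsto (fun k => l1Norm (z ^ k - uniform H)) atTop (𝓝 0) := by
  obtain ⟨θ, hθ, hθP⟩ := exists_pos_smul_uniform_le (coeff_pow_nonneg_s9 hz0 K) hK
  have hpow : ∀ j, ((z ^ j).coeff.support : Set G) ⊆ H :=
    support_coeff_pow_subset (S := H.toSubmonoid) hzH
  have hshift : ∀ k j, (z ^ k - uniform H) * z ^ j = z ^ (k + j) - uniform H := fun k j => by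
    rw [sub_mul, ← pow_add, uniform_mul_of_support_subset (hpow j), map_pow, hz1, one_pow,
      one_smul]
  refine tendsto_zero_of_antitone_of_le_mul (K := K) (fun k => l1Norm_nonneg _)
    (antitone_nat_of_succ_le fun k => ?_) (sub_lt_self 1 hθ) fun k => ?_
  · calc l1Norm (z ^ (k + 1) - uniform H) = l1Norm ((z ^ k - uniform H) * z ^ 1) := by
          rw [hshift]
      _ ≤ l1Norm (z ^ k - uniform H) * l1Norm (z ^ 1) := l1Norm_mul_le _ _
      _ = l1Norm (z ^ k - uniform H) := by
          rw [l1Norm_eq_augmentation (coeff_pow_nonneg_s9 hz0 1), map_pow, hz1, one_pow, mul_one]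
  · rw [← hshift]
    refine l1Norm_mul_le_of_smul_uniform_le (by rw [map_pow, hz1, one_pow]) hθP
      (fun g hg => ?_) (by rw [map_sub, map_pow, hz1, one_pow, augmentation_uniform, sub_self])
    classical
    rcases Finset.mem_union.1 (Finsupp.support_sub hg) with h | h
    exacts [hpow k h, mem_support_coeff_uniform.1 h]

theorem tendsto_coeff_pow_mul_add {x : MonoidAlgebra ℝ G} (hx0 : ∀ g, 0 ≤ x.coeff g)
    (hx1 : augmentation G x = 1) {m K : ℕ} (hm : ((x ^ m).coeff.support : Set G) ⊆ H)
    (hK : (H : Set G) ⊆ (x ^ (m * K)).coeff.support) (r : ℕ) :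
    Tendsto (fun k => ⇑(x ^ (k * m + r)).coeff) atTop (𝓝 ⇑(uniform H * x ^ r).coeff) := by
  have hz := tendsto_l1Norm_pow_sub_uniform (coeff_pow_nonneg_s9 hx0 m)
    (by rw [map_pow, hx1, one_pow]) hm (pow_mul x m K ▸ hK)
  simpa only [pow_add, pow_mul'] using tendsto_coeff_mul_of_tendsto_l1Norm hz (x ^ r)

end Convergence

end MonoidAlgebra

open MonoidAlgebra in
open scoped Classical in
/-- For `x` in the simplex of `R[G]`, the set of limits of converging subsequences of
`(x^k)` equals `{c_x x^r : 0 ≤ r < m_x}`; in particular `(x^n)` converges iff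
`x ∈ R[G_x]`, i.e. `Supp(x) ⊆ G_x` (equivalently `m_x = 1`).  Convergence in the
finite-dimensional algebra `R[G]` is expressed coordinatewise. -/
theorem stmt9 {G : Type*} [Group G] [Fintype G]
    (x : MonoidAlgebra ℝ G) (hx1 : ∑ g : G, x.coeff g = 1) (hx0 : ∀ g, 0 ≤ x.coeff g)
    (n : ℕ) (hn : IsLeast {k : ℕ | 0 < k ∧ (x ^ k).coeff (1 : G) ≠ 0} n)
    (H : Subgroup G) (hH : H = Subgroup.closure ((x ^ n).coeff.support : Set G))
    (c : MonoidAlgebra ℝ G)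
    (hc : c = (Nat.card H : ℝ)⁻¹ •
      ∑ g ∈ Finset.univ.filter (· ∈ H), MonoidAlgebra.single g (1 : ℝ))
    (m : ℕ) (hm : IsLeast {k : ℕ | 0 < k ∧ ((x ^ k).coeff.support : Set G) ⊆ (H : Set G)} m) :
    {y : MonoidAlgebra ℝ G | ∃ φ : ℕ → ℕ, StrictMono φ ∧
        ∀ g : G, Tendsto (fun k => (x ^ φ k).coeff g) atTop (nhds (y.coeff g))}
      = {y : MonoidAlgebra ℝ G | ∃ r : ℕ, r < m ∧ y = c * x ^ r} ∧
    ((∃ y : MonoidAlgebra ℝ G,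
        ∀ g : G, Tendsto (fun k : ℕ => (x ^ k).coeff g) atTop (nhds (y.coeff g))) ↔
      (x.coeff.support : Set G) ⊆ (H : Set G)) := by
  obtain rfl : c = uniform H := hc
  have hn1 : (1 : G) ∈ (x ^ n).coeff.support := Finsupp.mem_support_iff.2 hn.1.2
  obtain ⟨L, hL⟩ := exists_closure_subset_support_coeff_pow (coeff_pow_nonneg_s9 hx0 n) hn1
  have hK : (H : Set G) ⊆ (x ^ (m * (n * L))).coeff.support := by
    have hpow : x ^ (m * (n * L)) = (x ^ n) ^ (L * m) := by rw [← pow_mul]; ring_nf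
    rw [hH, hpow]
    exact hL.trans (Finset.coe_subset.2 (monotone_support_coeff_pow (coeff_pow_nonneg_s9 hx0 n) hn1
      (Nat.le_mul_of_pos_right L hm.1.1)))
  have hlim := tendsto_coeff_pow_mul_add hx0 (by rwa [augmentation_apply]) hm.1.2 hK
  have hsub : ∀ r, StrictMono fun k => k * m + r := fun r =>
    (strictMono_mul_right_of_pos hm.1.1).add_const r
  refine ⟨Set.ext fun y => ⟨?_, ?_⟩, ⟨?_, ?_⟩⟩
  · rintro ⟨φ, hφ, hy⟩
    obtain ⟨r, hr, hyr⟩ := exists_lt_eq_of_tendsto_comp_strictMono (f := fun k => ⇑(x ^ k).coeff)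
      hm.1.1 hlim hφ (tendsto_pi_nhds.2 hy)
    exact ⟨r, hr, coeff_injective (DFunLike.coe_injective hyr)⟩
  · rintro ⟨r, -, rfl⟩
    exact ⟨_, hsub r, tendsto_pi_nhds.1 (hlim r)⟩
  · rintro ⟨y, hy⟩
    have h0 := tendsto_nhds_unique ((tendsto_pi_nhds.2 hy).comp (hsub 0).tendsto_atTop) (hlim 0)
    have h1 := tendsto_nhds_unique ((tendsto_pi_nhds.2 hy).comp (hsub 1).tendsto_atTop) (hlim 1)
    rw [h0, pow_zero, mul_one, pow_one] at h1
    exact support_subset_of_uniform_mul_eq hx0 (coeff_injective (DFunLike.coe_injective h1.symm))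
  · intro hxH
    have hm1 : m = 1 := le_antisymm (hm.2 ⟨one_pos, by rwa [pow_one]⟩) hm.1.1
    refine ⟨uniform H, tendsto_pi_nhds.1 ?_⟩
    simpa [hm1] using hlim 0
end

section
/- Let G be a finite group and x ∈ S with c_x, m_x, n_x defined as usual. Then n_{x c_x} ≤ m_x; and if n_{x c_x} = n_x then n_x = m_x = m_{x c_x}. -/
/-!
With nonnegative coefficients no cancellation occurs, so `supp (f * g) = supp f * supp g`, and
the theorem becomes a statement about `S = supp x ⊆ G`: `n_x` is the least `k > 0` with
`1 ∈ S ^ k`, `supp c_x = G_x = ⟨S ^ n_x⟩` and `supp ((x c_x) ^ k) = (S G_x) ^ k`.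

Since `S ^ k G_x ⊆ (S G_x) ^ k`, any `s ∈ S` with `s ^ k ∈ G_x` gives
`1 = s ^ k (s ^ k)⁻¹ ∈ (S G_x) ^ k`; this yields `n_{xc_x} ≤ m_x`, and `n_{xc_x} ≤ m_{xc_x}` once
`G_{xc_x} ≤ G_x`. In a finite group `G_x` is the union of the `S ^ (n_x t)`, so
`(S G_x) ^ n_x ⊆ ⋃ₜ S ^ (n_x (1 + t)) ⊆ G_x`, which gives `G_{xc_x} ≤ G_x` when
`n_{xc_x} = n_x`. Together with `m_x ≤ n_x` and `m_{xc_x} ≤ n_{xc_x}` this closes the chain of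
inequalities.
-/

open scoped Pointwise

namespace MonoidAlgebra

variable {k G : Type*} [Semiring k]

lemma coeff_smul_sum_single_one [DecidableEq G] (r : k) (s : Finset G) (a : G) :
    (r • ∑ g ∈ s, single g (1 : k)).coeff a = if a ∈ s then r else 0 := by
  simp [coeff_sum, Finsupp.single_apply]

variable [PartialOrder k] [IsOrderedRing k]

section Mul

variable [Mul G] {f g : MonoidAlgebra k G}

lemma coeff_mul_nonneg_s10 (hf : ∀ a, 0 ≤ f.coeff a) (hg : ∀ a, 0 ≤ g.coeff a) (t : G) :
    0 ≤ (f * g).coeff t := by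
  classical
  rw [coeff_mul]
  refine Finset.sum_nonneg fun a _ => Finset.sum_nonneg fun b _ => ?_
  dsimp only
  split_ifs
  exacts [mul_nonneg (hf a) (hg b), le_rfl]

lemma mul_mem_support_coeff_mul_s10 [NoZeroDivisors k] (hf : ∀ a, 0 ≤ f.coeff a)
    (hg : ∀ a, 0 ≤ g.coeff a) {a b : G} (ha : a ∈ f.coeff.support) (hb : b ∈ g.coeff.support) :
    a * b ∈ (f * g).coeff.support := by
  classical
  have hterm (a' b' : G) : 0 ≤ if a' * b' = a * b then f.coeff a' * g.coeff b' else 0 := by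
    split_ifs
    exacts [mul_nonneg (hf a') (hg b'), le_rfl]
  rw [Finsupp.mem_support_iff] at ha hb ⊢
  simp only [coeff_mul, Finsupp.sum]
  intro hab
  rw [Finset.sum_eq_zero_iff_of_nonneg fun _ _ => Finset.sum_nonneg fun _ _ => hterm _ _] at hab
  have hab := hab a (Finsupp.mem_support_iff.2 ha)
  rw [Finset.sum_eq_zero_iff_of_nonneg fun _ _ => hterm _ _] at hab
  simpa [ha, hb] using hab b (Finsupp.mem_support_iff.2 hb)

lemma coe_support_coeff_mul_of_nonneg [NoZeroDivisors k] (hf : ∀ a, 0 ≤ f.coeff a)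
    (hg : ∀ a, 0 ≤ g.coeff a) :
    ((f * g).coeff.support : Set G) = f.coeff.support * g.coeff.support := by
  classical
  refine subset_antisymm ?_ ?_
  · rw [← Finset.coe_mul]
    exact Finset.coe_subset.2 (support_coeff_mul_subset f g)
  · rintro _ ⟨a, ha, b, hb, rfl⟩
    exact mul_mem_support_coeff_mul_s10 hf hg ha hb

end Mul

section Monoid

variable [Monoid G] {f : MonoidAlgebra k G}

lemma coeff_pow_nonneg_s10 (hf : ∀ a, 0 ≤ f.coeff a) : ∀ (n : ℕ) (t : G), 0 ≤ (f ^ n).coeff t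
  | 0, t => by
    classical
    rw [pow_zero, one_def, coeff_single, Finsupp.single_apply]
    split_ifs
    exacts [zero_le_one, le_rfl]
  | n + 1, t => by
    rw [pow_succ]
    exact coeff_mul_nonneg_s10 (coeff_pow_nonneg_s10 hf n) hf t

lemma coe_support_coeff_pow_of_nonneg [Nontrivial k] [NoZeroDivisors k]
    (hf : ∀ a, 0 ≤ f.coeff a) :
    ∀ n : ℕ, ((f ^ n).coeff.support : Set G) = (f.coeff.support : Set G) ^ n
  | 0 => by simp
  | n + 1 => by
    rw [pow_succ, coe_support_coeff_mul_of_nonneg (coeff_pow_nonneg_s10 hf n) hf,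
      coe_support_coeff_pow_of_nonneg hf n, pow_succ]

end Monoid

end MonoidAlgebra

namespace Set

variable {M : Type*} [Monoid M]

lemma pow_mul_subset_mul_pow {S T : Set M} (hT : (1 : M) ∈ T) {k : ℕ} (hk : k ≠ 0) :
    S ^ k * T ⊆ (S * T) ^ k := by
  obtain ⟨j, rfl⟩ := Nat.exists_eq_succ_of_ne_zero hk
  rw [pow_succ, pow_succ, mul_assoc]
  exact mul_subset_mul_right (pow_subset_pow_left (subset_mul_left S hT))

lemma exists_mem_pow_of_mem_closure {T : Set M} {g : M} (hg : g ∈ Submonoid.closure T) :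
    ∃ t : ℕ, g ∈ T ^ t := by
  induction hg using Submonoid.closure_induction with
  | mem a ha => exact ⟨1, by rwa [pow_one]⟩
  | one => exact ⟨0, by rw [pow_zero]; rfl⟩
  | mul a b _ _ iha ihb =>
    obtain ⟨t, ht⟩ := iha
    obtain ⟨u, hu⟩ := ihb
    exact ⟨t + u, by rw [pow_add]; exact mul_mem_mul ht hu⟩

lemma exists_mem_pow_add_mul_of_mem_mul_pow {S T : Set M} {n : ℕ}
    (hT : ∀ h ∈ T, ∃ t : ℕ, h ∈ S ^ (n * t)) :
    ∀ {k : ℕ} {g : M}, g ∈ (S * T) ^ k → ∃ t : ℕ, g ∈ S ^ (k + n * t)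
  | 0, g, hg => ⟨0, by simpa using hg⟩
  | k + 1, _, hg => by
    rw [pow_succ] at hg
    obtain ⟨a, ha, _, ⟨s, hs, h, hh, rfl⟩, rfl⟩ := hg
    obtain ⟨t, ht⟩ := exists_mem_pow_add_mul_of_mem_mul_pow hT ha
    obtain ⟨u, hu⟩ := hT h hh
    refine ⟨t + u, ?_⟩
    rw [show k + 1 + n * (t + u) = k + n * t + 1 + n * u by ring, pow_add, pow_succ, mul_assoc]
    exact mul_mem_mul ht (mul_mem_mul hs hu)

variable {G : Type*} [Group G]

lemma one_mem_mul_pow_of_mem_pow (H : Subgroup G) {S : Set G} {k : ℕ} (hk : k ≠ 0) {a : G}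
    (haS : a ∈ S ^ k) (haH : a ∈ H) : (1 : G) ∈ (S * H) ^ k :=
  pow_mul_subset_mul_pow H.one_mem hk (mul_inv_cancel a ▸ mul_mem_mul haS (H.inv_mem haH))

lemma mul_closure_pow_pow_subset [Finite G] (S : Set G) (n : ℕ) :
    (S * Subgroup.closure (S ^ n)) ^ n ⊆ Subgroup.closure (S ^ n) := by
  have hmem (h) (hh : h ∈ Subgroup.closure (S ^ n)) : ∃ t : ℕ, h ∈ S ^ (n * t) := by
    rw [← Subgroup.mem_toSubmonoid, Subgroup.closure_toSubmonoid_of_finite] at hh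
    simpa only [pow_mul] using exists_mem_pow_of_mem_closure hh
  intro g hg
  obtain ⟨t, ht⟩ := exists_mem_pow_add_mul_of_mem_mul_pow hmem hg
  rw [show n + n * t = n * (t + 1) by ring, pow_mul] at ht
  exact Subgroup.pow_subset Subgroup.subset_closure ht

theorem returnTimes_mul_closure_pow [Finite G] {S : Set G} {n m n' m' : ℕ} {H H' : Subgroup G}
    (hn : IsLeast {k | 0 < k ∧ (1 : G) ∈ S ^ k} n) (hH : H = Subgroup.closure (S ^ n))
    (hm : IsLeast {k | 0 < k ∧ S ^ k ⊆ H} m)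
    (hn' : IsLeast {k | 0 < k ∧ (1 : G) ∈ (S * H) ^ k} n')
    (hH' : H' = Subgroup.closure ((S * (H : Set G)) ^ n'))
    (hm' : IsLeast {k | 0 < k ∧ (S * H) ^ k ⊆ H'} m') :
    n' ≤ m ∧ (n' = n → n = m ∧ m = m') := by
  obtain ⟨s, hs⟩ : S.Nonempty := nonempty_iff_ne_empty.2 fun hS => by
    simpa [hS, empty_pow hn.1.1.ne'] using hn.1.2
  have hn'm : n' ≤ m := hn'.2 ⟨hm.1.1,
    one_mem_mul_pow_of_mem_pow H hm.1.1.ne' (pow_mem_pow hs) (hm.1.2 (pow_mem_pow hs))⟩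
  refine ⟨hn'm, fun hn'n => ?_⟩
  have hmn : m ≤ n := hm.2 ⟨hn.1.1, hH ▸ Subgroup.subset_closure⟩
  have hH'H : H' ≤ H := by
    subst hH hH' hn'n
    exact (Subgroup.closure_le _).2 (mul_closure_pow_pow_subset S n')
  have hm'n' : m' ≤ n' := hm'.2 ⟨hn'.1.1, hH' ▸ Subgroup.subset_closure⟩
  have hsm' : s ^ m' ∈ H :=
    hH'H (hm'.1.2 (pow_subset_pow_left (subset_mul_left S H.one_mem) (pow_mem_pow hs)))
  have hn'm' : n' ≤ m' :=
    hn'.2 ⟨hm'.1.1, one_mem_mul_pow_of_mem_pow H hm'.1.1.ne' (pow_mem_pow hs) hsm'⟩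
  omega

end Set

open scoped Classical in
theorem stmt10_general {G : Type*} [Group G] [Fintype G]
    (x : MonoidAlgebra ℝ G) (hx0 : ∀ g, 0 ≤ x.coeff g)
    (n : ℕ) (hn : IsLeast {k : ℕ | 0 < k ∧ (x ^ k).coeff (1 : G) ≠ 0} n)
    (H : Subgroup G) (hH : H = Subgroup.closure ((x ^ n).coeff.support : Set G))
    (c : MonoidAlgebra ℝ G)
    (hc : c = (Nat.card H : ℝ)⁻¹ •
      ∑ g ∈ Finset.univ.filter (· ∈ H), MonoidAlgebra.single g (1 : ℝ))
    (m : ℕ) (hm : IsLeast {k : ℕ | 0 < k ∧ ((x ^ k).coeff.support : Set G) ⊆ (H : Set G)} m)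
    (n' : ℕ) (hn' : IsLeast {k : ℕ | 0 < k ∧ ((x * c) ^ k).coeff (1 : G) ≠ 0} n')
    (H' : Subgroup G) (hH' : H' = Subgroup.closure (((x * c) ^ n').coeff.support : Set G))
    (m' : ℕ)
    (hm' : IsLeast {k : ℕ | 0 < k ∧ (((x * c) ^ k).coeff.support : Set G) ⊆ (H' : Set G)} m') :
    n' ≤ m ∧ (n' = n → n = m ∧ m = m') := by
  have hc_coeff (g : G) : c.coeff g = if g ∈ H then (Nat.card H : ℝ)⁻¹ else 0 := by
    rw [hc, MonoidAlgebra.coeff_smul_sum_single_one]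
    simp
  have hc0 (g : G) : 0 ≤ c.coeff g := by
    rw [hc_coeff]
    split_ifs
    exacts [by positivity, le_rfl]
  have hc_support : (c.coeff.support : Set G) = H := by
    ext g
    simp [hc_coeff]
  have hx_pow (k : ℕ) : ((x ^ k).coeff.support : Set G) = (x.coeff.support : Set G) ^ k :=
    MonoidAlgebra.coe_support_coeff_pow_of_nonneg hx0 k
  have hxc_pow (k : ℕ) :
      (((x * c) ^ k).coeff.support : Set G) = ((x.coeff.support : Set G) * H) ^ k := by
    rw [MonoidAlgebra.coe_support_coeff_pow_of_nonneg (MonoidAlgebra.coeff_mul_nonneg_s10 hx0 hc0),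
      MonoidAlgebra.coe_support_coeff_mul_of_nonneg hx0 hc0, hc_support]
  have hone (f : MonoidAlgebra ℝ G) : f.coeff 1 ≠ 0 ↔ (1 : G) ∈ (f.coeff.support : Set G) := by
    simp
  simp only [hone, hx_pow, hxc_pow] at hn hH hm hn' hH' hm'
  exact Set.returnTimes_mul_closure_pow hn hH hm hn' hH' hm'

open scoped Classical in
/-- For `x` in the simplex of `R[G]`, with `n_x, G_x, c_x, m_x` as usual and the analogous
quantities `n_{xc_x}, G_{xc_x}, m_{xc_x}` for `x·c_x`: one has `n_{xc_x} ≤ m_x`, and if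
`n_{xc_x} = n_x` then `n_x = m_x = m_{xc_x}`. -/
theorem stmt10 {G : Type*} [Group G] [Fintype G]
    (x : MonoidAlgebra ℝ G) (hx1 : ∑ g : G, x.coeff g = 1) (hx0 : ∀ g, 0 ≤ x.coeff g)
    (n : ℕ) (hn : IsLeast {k : ℕ | 0 < k ∧ (x ^ k).coeff (1 : G) ≠ 0} n)
    (H : Subgroup G) (hH : H = Subgroup.closure ((x ^ n).coeff.support : Set G))
    (c : MonoidAlgebra ℝ G)
    (hc : c = (Nat.card H : ℝ)⁻¹ •
      ∑ g ∈ Finset.univ.filter (· ∈ H), MonoidAlgebra.single g (1 : ℝ))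
    (m : ℕ) (hm : IsLeast {k : ℕ | 0 < k ∧ ((x ^ k).coeff.support : Set G) ⊆ (H : Set G)} m)
    (n' : ℕ) (hn' : IsLeast {k : ℕ | 0 < k ∧ ((x * c) ^ k).coeff (1 : G) ≠ 0} n')
    (H' : Subgroup G) (hH' : H' = Subgroup.closure (((x * c) ^ n').coeff.support : Set G))
    (m' : ℕ)
    (hm' : IsLeast {k : ℕ | 0 < k ∧ (((x * c) ^ k).coeff.support : Set G) ⊆ (H' : Set G)} m') :
    n' ≤ m ∧ (n' = n → n = m ∧ m = m') :=
  stmt10_general x hx0 n hn H hH c hc m hm n' hn' H' hH' m' hm'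
end
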